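/- Fix a real wave number k ≠ 0. For each ε > 0, let λ₁(ε), λ₂(ε) be the pair of non-real complex-conjugate roots of P_k(λ) = −λ³ − (1/ε)λ² − 3k²λ − (5/3)k²/ε, and define A(k²,ε) = −4ε(1 + ε(λ₁+λ₂)) / (3 + 3ε(λ₁+λ₂) + ε²(3λ₁λ₂ − 4k²)). Then lim_{ε→0⁺} A(k²,ε)/ε = −4/3; in particular the slow-manifold stress closure satisfies i k A û = −(4/3)ε i k û + O(ε²), recovering the Navier–Stokes viscous stress at first order in ε. -/

import Mathlib

/-- The characteristic polynomial `P_k(λ)` of the Grad generator. -/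
noncomputable def gradP (ε k : ℝ) (l : ℂ) : ℂ :=
  -l^3 - (1/ε) * l^2 - 3 * k^2 * l - (5/3) * k^2 / ε

open Complex in
lemma grad_key (k : ℝ) (hk : k ≠ 0) {ε : ℝ} (hε : 0 < ε) {w : ℂ}
    (hroot : gradP ε k w = 0) (him : w.im ≠ 0) :
    (-5*k^2*ε^2 ≤ ε * (2 * w.re) ∧ ε * (2 * w.re) ≤ 0) ∧
      (0 < Complex.normSq w ∧ Complex.normSq w ≤ 3*k^2) := by
  have hεC : (ε : ℂ) ≠ 0 := by exact_mod_cast hε.ne'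
  have h1 : -(ε:ℂ)*w^3 - w^2 - 3*k^2*ε*w - 5/3*k^2 = 0 := by
    have h := hroot
    unfold gradP at h
    field_simp at h
    apply mul_left_cancel₀ (show ((3:ℂ)*ε) ≠ 0 by simp [hεC])
    rw [mul_zero]
    linear_combination (ε:ℂ) * h
  set c : ℂ := starRingEnd ℂ w with hc
  have h2 : -(ε:ℂ)*c^3 - c^2 - 3*k^2*ε*c - 5/3*k^2 = 0 := by
    have := congrArg (starRingEnd ℂ) h1
    simpa [hc, map_sub, map_mul, map_neg, map_pow, map_div₀, map_ofNat] using this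
  have hadd : w + c = ((2 * w.re : ℝ) : ℂ) := Complex.add_conj w
  have hmul : w * c = ((Complex.normSq w : ℝ) : ℂ) := Complex.mul_conj w
  have hsub : w - c = ((2 * w.im : ℝ) : ℂ) * Complex.I := Complex.sub_conj w
  set x := w.re
  set p := Complex.normSq w
  -- relation R2 (from the sum of the two conjugate root equations)
  have hR2 : (ε*(8*x^3 - 6*p*x) + (4*x^2 - 2*p) + 6*k^2*ε*x + 10/3*k^2 : ℝ) = 0 := by
    have T : -(ε:ℂ)*((w+c)^3 - 3*(w*c)*(w+c)) - ((w+c)^2 - 2*(w*c))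
        - 3*k^2*ε*(w+c) - 10/3*k^2 = 0 := by linear_combination h1 + h2
    rw [hadd, hmul] at T
    push_cast at T
    have : ((ε*(8*x^3 - 6*p*x) + (4*x^2 - 2*p) + 6*k^2*ε*x + 10/3*k^2 : ℝ) : ℂ) = 0 := by
      push_cast
      linear_combination -T
    exact_mod_cast this
  -- relation R1 (from the difference)
  have hR1 : (ε*(4*x^2 - p) + 2*x + 3*k^2*ε : ℝ) = 0 := by
    have T : (w - c) * (-(ε:ℂ)*((w+c)^2 - (w*c)) - (w+c) - 3*k^2*ε) = 0 := by
      linear_combination h1 - h2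
    rw [hadd, hmul, hsub] at T
    rcases mul_eq_zero.1 T with h | h
    · exfalso
      rcases mul_eq_zero.1 h with h' | h'
      · have : (2 * w.im : ℝ) = 0 := by exact_mod_cast h'
        exact him (by linarith)
      · exact Complex.I_ne_zero h'
    · push_cast at h
      have : ((ε*(4*x^2 - p) + 2*x + 3*k^2*ε : ℝ) : ℂ) = 0 := by
        push_cast
        linear_combination -h
      exact_mod_cast this
  -- now purely real reasoning
  set t := ε * (2 * x) with ht
  have hk2 : (0:ℝ) < k^2 := by positivity
  have hp : 0 < p := by
    apply Complex.normSq_pos.2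
    intro h0
    exact him (by simp [h0])
  have hb : p * (1 + t) = 5/3 * k^2 := by
    rw [ht]; linear_combination x * hR1 - (1/2) * hR2
  have ha : t * (1 + t)^2 = -(ε^2 * k^2) * (3*t + 4/3) := by
    rw [ht]; linear_combination (ε*(3*ε*x+1)) * hR1 - (ε^2/2) * hR2
  have h1t : 0 < 1 + t := by nlinarith [mul_pos hp hk2]
  have htneg : t ≤ 0 := by nlinarith [mul_pos (mul_pos hε hε) hk2, sq_nonneg (1+t)]
  have ht49 : -(4/9 : ℝ) < t := by nlinarith [mul_pos (mul_pos hε hε) hk2, sq_nonneg (1+t)]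
  have htlow : -5*k^2*ε^2 ≤ t := by
    have e1 : (0:ℝ) ≤ -t * ((t + 4/9) * (t + 14/9)) := by
      apply mul_nonneg (by linarith)
      apply mul_nonneg (by linarith) (by linarith)
    have e2 : (0:ℝ) ≤ ε^2 * k^2 * (-t) := by
      apply mul_nonneg (by positivity) (by linarith)
    nlinarith [mul_pos (mul_pos hε hε) hk2]
  have hpup : p ≤ 3*k^2 := by nlinarith
  exact ⟨⟨htlow, htneg⟩, hp, hpup⟩

/-- The slow-manifold closure coefficient `A(k²,ε)` built from the two acoustic roots. -/
noncomputable def gradA (ε k : ℝ) (l₁ l₂ : ℂ) : ℂ :=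
  -4 * ε * (1 + ε * (l₁ + l₂)) /
    (3 + 3 * ε * (l₁ + l₂) + ε^2 * (3 * l₁ * l₂ - 4 * k^2))

theorem grad_A_over_eps_tendsto (k : ℝ) (hk : k ≠ 0) (l₁ l₂ : ℝ → ℂ)
    (hroot₁ : ∀ ε : ℝ, 0 < ε → gradP ε k (l₁ ε) = 0)
    (hroot₂ : ∀ ε : ℝ, 0 < ε → gradP ε k (l₂ ε) = 0)
    (hnonreal : ∀ ε : ℝ, 0 < ε → (l₁ ε).im ≠ 0)
    (hconj : ∀ ε : ℝ, 0 < ε → l₂ ε = starRingEnd ℂ (l₁ ε)) :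
    Filter.Tendsto (fun ε : ℝ => gradA ε k (l₁ ε) (l₂ ε) / (ε : ℂ))
      (nhdsWithin 0 (Set.Ioi 0)) (nhds (-4/3 : ℂ)) := by
  set T : ℝ → ℝ := fun ε => ε * (2 * (l₁ ε).re) with hT
  set P : ℝ → ℝ := fun ε => Complex.normSq (l₁ ε) with hP
  have hmem : ∀ ε ∈ Set.Ioi (0:ℝ),
      (-5*k^2*ε^2 ≤ T ε ∧ T ε ≤ 0) ∧ (0 < P ε ∧ P ε ≤ 3*k^2) := fun ε hε =>
    grad_key k hk hε (hroot₁ ε hε) (hnonreal ε hε)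
  have hev : ∀ᶠ ε in nhdsWithin (0:ℝ) (Set.Ioi 0),
      (-5*k^2*ε^2 ≤ T ε ∧ T ε ≤ 0) ∧ (0 < P ε ∧ P ε ≤ 3*k^2) :=
    Filter.eventually_of_mem self_mem_nhdsWithin hmem
  have hsq : Filter.Tendsto (fun ε : ℝ => -5*k^2*ε^2) (nhdsWithin 0 (Set.Ioi 0)) (nhds 0) := by
    have h : Filter.Tendsto (fun ε : ℝ => -5*k^2*ε^2) (nhds 0) (nhds (-5*k^2*0^2)) :=
      Continuous.tendsto (by continuity) 0
    simpa using h.mono_left nhdsWithin_le_nhds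
  have hT0 : Filter.Tendsto T (nhdsWithin 0 (Set.Ioi 0)) (nhds 0) :=
    tendsto_of_tendsto_of_tendsto_of_le_of_le' hsq tendsto_const_nhds
      (hev.mono fun ε h => h.1.1) (hev.mono fun ε h => h.1.2)
  have hsq3 : Filter.Tendsto (fun ε : ℝ => ε^2*(3*k^2)) (nhdsWithin 0 (Set.Ioi 0)) (nhds 0) := by
    have h : Filter.Tendsto (fun ε : ℝ => ε^2*(3*k^2)) (nhds 0) (nhds (0^2*(3*k^2))) :=
      Continuous.tendsto (by continuity) 0
    simpa using h.mono_left nhdsWithin_le_nhds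
  have hP0 : Filter.Tendsto (fun ε => ε^2 * P ε) (nhdsWithin 0 (Set.Ioi 0)) (nhds 0) :=
    tendsto_of_tendsto_of_tendsto_of_le_of_le' tendsto_const_nhds hsq3
      (hev.mono fun ε h => mul_nonneg (sq_nonneg ε) h.2.1.le)
      (hev.mono fun ε h => by nlinarith [sq_nonneg ε, h.2.2, h.2.1])
  have hsq4 : Filter.Tendsto (fun ε : ℝ => ε^2*(4*k^2)) (nhdsWithin 0 (Set.Ioi 0)) (nhds 0) := by
    have h : Filter.Tendsto (fun ε : ℝ => ε^2*(4*k^2)) (nhds 0) (nhds (0^2*(4*k^2))) :=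
      Continuous.tendsto (by continuity) 0
    simpa using h.mono_left nhdsWithin_le_nhds
  have hD0 : Filter.Tendsto (fun ε => ε^2*(3*P ε - 4*k^2)) (nhdsWithin 0 (Set.Ioi 0)) (nhds 0) := by
    have h : Filter.Tendsto (fun ε => 3*(ε^2 * P ε) - ε^2*(4*k^2))
        (nhdsWithin 0 (Set.Ioi 0)) (nhds (3*0 - 0)) := (hP0.const_mul 3).sub hsq4
    simp only [mul_zero, sub_zero] at h
    refine h.congr fun ε => by ring
  -- complex versions
  have hTC : Filter.Tendsto (fun ε => ((T ε : ℝ) : ℂ)) (nhdsWithin 0 (Set.Ioi 0)) (nhds 0) := by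
    have := (Complex.continuous_ofReal.tendsto 0).comp hT0
    simpa [Function.comp_def] using this
  have hDC : Filter.Tendsto (fun ε => ((ε^2*(3*P ε - 4*k^2) : ℝ) : ℂ))
      (nhdsWithin 0 (Set.Ioi 0)) (nhds 0) := by
    have := (Complex.continuous_ofReal.tendsto 0).comp hD0
    simpa [Function.comp_def] using this
  have hnum : Filter.Tendsto (fun ε => (-4 : ℂ)*(1 + ((T ε : ℝ) : ℂ)))
      (nhdsWithin 0 (Set.Ioi 0)) (nhds (-4)) := by
    have h := (tendsto_const_nhds (x := (1:ℂ))).add hTC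
    have h2 := (tendsto_const_nhds (x := (-4:ℂ))).mul h
    simpa using h2
  have hden : Filter.Tendsto (fun ε => (3 : ℂ) + 3*((T ε : ℝ) : ℂ) + ((ε^2*(3*P ε - 4*k^2) : ℝ) : ℂ))
      (nhdsWithin 0 (Set.Ioi 0)) (nhds 3) := by
    have h := ((tendsto_const_nhds (x := (3:ℂ))).add (hTC.const_mul 3)).add hDC
    simpa using h
  have hdiv := hnum.div hden (by norm_num)
  have heq : (fun ε : ℝ => (-4 : ℂ)*(1 + ((T ε : ℝ) : ℂ)) /
        ((3 : ℂ) + 3*((T ε : ℝ) : ℂ) + ((ε^2*(3*P ε - 4*k^2) : ℝ) : ℂ)))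
      =ᶠ[nhdsWithin (0:ℝ) (Set.Ioi 0)]
      (fun ε : ℝ => gradA ε k (l₁ ε) (l₂ ε) / (ε : ℂ)) := by
    refine Filter.eventually_of_mem self_mem_nhdsWithin fun ε hε => ?_
    have hε' : (0:ℝ) < ε := hε
    have hεC : (ε : ℂ) ≠ 0 := by exact_mod_cast hε'.ne'
    have hl2 := hconj ε hε'
    have hS : l₁ ε + l₂ ε = ((2 * (l₁ ε).re : ℝ) : ℂ) := by
      rw [hl2]; exact Complex.add_conj _
    have hM : l₁ ε * l₂ ε = ((P ε : ℝ) : ℂ) := by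
      rw [hl2]; exact Complex.mul_conj _
    have e1 : -4*(ε:ℂ)*(1+(ε:ℂ)*(l₁ ε + l₂ ε)) = (-4*(1+((T ε : ℝ):ℂ)))*(ε:ℂ) := by
      rw [hS]; simp only [hT]; push_cast; ring
    have e2 : (3:ℂ) + 3*(ε:ℂ)*(l₁ ε + l₂ ε) + (ε:ℂ)^2*(3*(l₁ ε)*(l₂ ε) - 4*(k:ℂ)^2)
        = (3 : ℂ) + 3*((T ε : ℝ) : ℂ) + ((ε^2*(3*P ε - 4*k^2) : ℝ) : ℂ) := by
      rw [hS, show (3:ℂ)*(l₁ ε)*(l₂ ε) = 3*((l₁ ε)*(l₂ ε)) by ring, hM]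
      simp only [hT]; push_cast; ring
    dsimp only
    unfold gradA
    rw [e1, e2, div_div]
    rw [mul_comm ((3 : ℂ) + 3*((T ε : ℝ) : ℂ) + ((ε^2*(3*P ε - 4*k^2) : ℝ) : ℂ)) (ε:ℂ)]
    rw [mul_comm (-4*(1+((T ε : ℝ):ℂ))) (ε:ℂ), mul_div_mul_left _ _ hεC]
  exact hdiv.congr' heq
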